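/- arXiv:1411.4661 — 3 statements merged into one kernel-verified Lean document; each statement's English description precedes it below -/
import Mathlib

section
/- Let B₀, B₁ ∈ M₂(ℂ), t ∈ ℂ with t ≠ 0 and t ≠ −1, s = 1/(t+1), E₁₁ = diag(1,0), and B̃(ξ) = (ξ−1)⁻¹·B₀ + (ξ−s)⁻¹·B₁ − ξ⁻²·E₁₁ − ξ⁻¹·(B₀+B₁) for ξ ∈ ℂ \ {0, 1, s}. Then the function ξ ↦ (−s²/2)·(ξ−s)·( tr(B̃(ξ)²) − (ξ−s)⁻²·tr(B₁²) ) tends, as ξ → s with ξ ≠ s, to tr(B₀B₁)/t + (B₁)₁₁ + tr(B₁²)/(t+1). -/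
open Matrix Filter Topology

/-- Half the residue at ξ = s of tr(B̃(ξ)²), multiplied by −s², equals
tr(B₀B₁)/t + (B₁)₁₁ + tr(B₁²)/(t+1), stated as a limit. -/
theorem residue_trace_Btilde_squared_pullback
    (B₀ B₁ : Matrix (Fin 2) (Fin 2) ℂ) (t : ℂ) (ht0 : t ≠ 0) (ht1 : t ≠ -1)
    (s : ℂ) (hs : s = 1 / (t + 1))
    (E₁₁ : Matrix (Fin 2) (Fin 2) ℂ) (hE : E₁₁ = !![1, 0; 0, 0])
    (Bt : ℂ → Matrix (Fin 2) (Fin 2) ℂ)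
    (hBt : ∀ ξ, Bt ξ =
      (ξ - 1)⁻¹ • B₀ + (ξ - s)⁻¹ • B₁ - (ξ ^ 2)⁻¹ • E₁₁ - ξ⁻¹ • (B₀ + B₁)) :
    Tendsto
      (fun ξ => (-s ^ 2 / 2) * ((ξ - s) *
        (Matrix.trace (Bt ξ * Bt ξ) - ((ξ - s) ^ 2)⁻¹ * Matrix.trace (B₁ * B₁))))
      (𝓝[≠] s)
      (𝓝 (Matrix.trace (B₀ * B₁) / t + B₁ 0 0 + Matrix.trace (B₁ * B₁) / (t + 1))) := by
  have ht1' : t + 1 ≠ 0 := fun h => ht1 (by linear_combination h)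
  have hs0 : s ≠ 0 := by rw [hs]; exact one_div_ne_zero ht1'
  have hs1 : s ≠ 1 := by
    rw [hs]; intro h
    rw [div_eq_one_iff_eq ht1'] at h
    exact ht0 (by linear_combination -h)
  set C : ℂ → Matrix (Fin 2) (Fin 2) ℂ :=
    fun ξ => (ξ - 1)⁻¹ • B₀ - (ξ ^ 2)⁻¹ • E₁₁ - ξ⁻¹ • (B₀ + B₁) with hC
  -- the comparison function, continuous at s
  have hCc : ContinuousAt C s := by
    apply ContinuousAt.sub
    apply ContinuousAt.sub
    · exact ((continuousAt_id.sub continuousAt_const).inv₀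
        (by simpa using sub_ne_zero.2 hs1)).smul continuousAt_const
    · exact ((continuousAt_id.pow 2).inv₀
        (by simpa using pow_ne_zero 2 hs0)).smul continuousAt_const
    · exact (continuousAt_id.inv₀ hs0).smul continuousAt_const
  have htrace : Continuous (Matrix.trace : Matrix (Fin 2) (Fin 2) ℂ → ℂ) :=
    Continuous.matrix_trace continuous_id
  have hcont : ContinuousAt (fun ξ => (-s ^ 2 / 2) *
      ((ξ - s) * Matrix.trace (C ξ * C ξ) + 2 * Matrix.trace (C ξ * B₁))) s := by
    apply continuousAt_const.mul
    apply ContinuousAt.add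
    · exact (continuousAt_id.sub continuousAt_const).mul
        (htrace.continuousAt.comp (hCc.mul hCc))
    · exact continuousAt_const.mul
        (htrace.continuousAt.comp (hCc.mul continuousAt_const))
  have hlim := hcont.continuousWithinAt (s := {s}ᶜ)
  -- value at s
  have hval : (-s ^ 2 / 2) *
      ((s - s) * Matrix.trace (C s * C s) + 2 * Matrix.trace (C s * B₁)) =
      Matrix.trace (B₀ * B₁) / t + B₁ 0 0 + Matrix.trace (B₁ * B₁) / (t + 1) := by
    have htr : Matrix.trace (C s * B₁) =
        (s - 1)⁻¹ * Matrix.trace (B₀ * B₁) - (s ^ 2)⁻¹ * (B₁ 0 0)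
          - s⁻¹ * (Matrix.trace (B₀ * B₁) + Matrix.trace (B₁ * B₁)) := by
      have hE' : Matrix.trace (E₁₁ * B₁) = B₁ 0 0 := by
        simp [hE, Matrix.trace_fin_two, Matrix.mul_apply, Fin.sum_univ_two,
          Matrix.vecMul, dotProduct]
      simp only [hC, Matrix.sub_mul, Matrix.smul_mul, Matrix.add_mul,
        Matrix.trace_sub, Matrix.trace_smul, Matrix.trace_add, smul_eq_mul, hE']
      try ring
    rw [htr, hs]
    field_simp
    ring_nf
    field_simp [ht0]
    ring
  rw [← hval]
  apply Tendsto.congr' _ hlim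
  filter_upwards [self_mem_nhdsWithin] with ξ (hξ : ξ ≠ s)
  have hd : ξ - s ≠ 0 := sub_ne_zero.2 hξ
  have hBtC : Bt ξ = C ξ + (ξ - s)⁻¹ • B₁ := by
    rw [hBt, hC]; module
  have hexp : Matrix.trace (Bt ξ * Bt ξ) =
      Matrix.trace (C ξ * C ξ) + 2 * (ξ - s)⁻¹ * Matrix.trace (C ξ * B₁)
        + ((ξ - s) ^ 2)⁻¹ * Matrix.trace (B₁ * B₁) := by
    rw [hBtC]
    simp only [Matrix.add_mul, Matrix.mul_add, Matrix.smul_mul, Matrix.mul_smul,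
      Matrix.trace_add, Matrix.trace_smul, smul_smul, smul_eq_mul]
    rw [Matrix.trace_mul_comm B₁ (C ξ)]
    have h2 : ((ξ - s) ^ 2)⁻¹ = (ξ - s)⁻¹ * (ξ - s)⁻¹ := by rw [sq, mul_inv]
    rw [h2]; ring
  rw [hexp]
  have h1 : (ξ - s) * (ξ - s)⁻¹ = 1 := mul_inv_cancel₀ hd
  linear_combination (s ^ 2) * Matrix.trace (C ξ * B₁) * h1
end

section
/- Let A ∈ M₂(ℂ) and u, f, ξ ∈ ℂ with u ≠ 0. Let Γ = [[f/u + ξ, −u], [1/u, 0]] ∈ M₂(ℂ) and D = [[1,0],[0,0]] ∈ M₂(ℂ), and define B = D·Γ⁻¹ + Γ·A·Γ⁻¹. Then tr(B²) = tr(A²) − 2·A₁₂/u, where A₁₂ is the upper-right entry of A. -/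
/-!
Expanding `B² = (DΓ⁻¹ + ΓAΓ⁻¹)²` and cancelling `Γ⁻¹Γ`, invariance of the trace under
conjugation and cyclic permutation gives `tr B² = tr (DΓ⁻¹)² + 2 tr (AΓ⁻¹D) + tr A²` for any
invertible `Γ`. For the given `Γ` (of determinant 1), `DΓ⁻¹ = !![0, u; 0, 0]` is nilpotent and
`Γ⁻¹D = !![0, 0; -1/u, 0]`, so the middle term is `-2 A₁₂ / u`.
-/

open Matrix

namespace Matrix

variable {n R : Type*} [Fintype n] [DecidableEq n] [CommRing R]

theorem trace_mul_self_add_conj {Γ : Matrix n n R} (hΓ : IsUnit Γ) (A D : Matrix n n R) :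
    trace ((D * Γ⁻¹ + Γ * A * Γ⁻¹) * (D * Γ⁻¹ + Γ * A * Γ⁻¹)) =
      trace (D * Γ⁻¹ * (D * Γ⁻¹)) + 2 * trace (A * Γ⁻¹ * D) + trace (A * A) := by
  have hΓΓ : Γ⁻¹ * Γ = 1 := nonsing_inv_mul Γ ((isUnit_iff_isUnit_det Γ).mp hΓ)
  have expand : (D * Γ⁻¹ + Γ * A * Γ⁻¹) * (D * Γ⁻¹ + Γ * A * Γ⁻¹) =
      D * Γ⁻¹ * (D * Γ⁻¹) + D * A * Γ⁻¹ + Γ * (A * Γ⁻¹ * D) * Γ⁻¹ + Γ * (A * A) * Γ⁻¹ := by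
    simp only [add_mul, mul_add, Matrix.mul_assoc, ← Matrix.mul_assoc Γ⁻¹ Γ, hΓΓ,
      Matrix.one_mul]
    abel
  rw [expand, trace_add, trace_add, trace_add, trace_conj hΓ, trace_conj hΓ,
    ← trace_mul_cycle A Γ⁻¹ D]
  ring

theorem inv_gauge_fin_two {u : ℂ} (hu : u ≠ 0) (a : ℂ) :
    (!![a, -u; 1 / u, 0] : Matrix (Fin 2) (Fin 2) ℂ)⁻¹ = !![0, u; -(1 / u), a] := by
  rw [inv_def, det_fin_two_of, adjugate_fin_two_of]
  field_simp
  simp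

end Matrix

/-- The gauge transformation B = DΓ⁻¹ + ΓAΓ⁻¹ with Γ = Γ₁(ξ,s) and
D = ∂Γ/∂ξ satisfies tr(B²) = tr(A²) − 2A₁₂/u. -/
theorem trace_sq_gauge_transform
    (A : Matrix (Fin 2) (Fin 2) ℂ) (u f ξ : ℂ) (hu : u ≠ 0)
    (Γ D B : Matrix (Fin 2) (Fin 2) ℂ)
    (hΓ : Γ = !![f / u + ξ, -u; 1 / u, 0])
    (hD : D = !![1, 0; 0, 0])
    (hB : B = D * Γ⁻¹ + Γ * A * Γ⁻¹) :
    Matrix.trace (B * B) = Matrix.trace (A * A) - 2 * A 0 1 / u := by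
  have hΓinv : Γ⁻¹ = !![0, u; -(1 / u), f / u + ξ] := hΓ ▸ inv_gauge_fin_two hu _
  have hΓunit : IsUnit Γ := by
    rw [isUnit_iff_isUnit_det, hΓ, det_fin_two_of]
    simp [hu]
  rw [hB, trace_mul_self_add_conj hΓunit, hΓinv, hD, A.eta_fin_two]
  simp [trace_fin_two]
  field_simp
  ring
end

section
/- Let {U_i}_{i∈I} be an open cover of ℂ, and for each i ∈ I let τ_i : U_i → ℂ be a holomorphic function which is not identically zero on any connected component of U_i. Suppose that for every pair i, j ∈ I with U_i ∩ U_j ≠ ∅ there is a constant c_{ij} ∈ ℂ, c_{ij} ≠ 0, such that τ_i(z) = c_{ij}·τ_j(z) for all z ∈ U_i ∩ U_j. Then there exists an entire function τ : ℂ → ℂ such that for every i ∈ I there is a locally constant function c_i : U_i → ℂ \ {0} with τ(z) = c_i(z)·τ_i(z) for all z ∈ U_i. -/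
open Metric Set

namespace GlueTauAux

variable {I : Type*} (U : I → Set ℂ) (τ : I → ℂ → ℂ)

/-- `g` is, near every point of `V`, a nonzero constant multiple of some `τ i`. -/
def GoodOn (V : Set ℂ) (g : ℂ → ℂ) : Prop :=
  ∀ z ∈ V, ∃ i m N, IsOpen N ∧ z ∈ N ∧ N ⊆ V ∧ N ⊆ U i ∧ m ≠ 0 ∧ ∀ w ∈ N, g w = m * τ i w

variable {U τ}

lemma exists_ne_zero (hopen : ∀ i, IsOpen (U i)) (hhol : ∀ i, DifferentiableOn ℂ (τ i) (U i))
    (hnz : ∀ i, ∀ z ∈ U i, ∃ w ∈ connectedComponentIn (U i) z, τ i w ≠ 0)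
    (i : I) {N : Set ℂ} (hN : IsOpen N) (hNU : N ⊆ U i) (hne : N.Nonempty) :
    ∃ w ∈ N, τ i w ≠ 0 := by
  by_contra h
  push_neg at h
  obtain ⟨z, hz⟩ := hne
  have hzU : z ∈ U i := hNU hz
  have hC : IsOpen (connectedComponentIn (U i) z) := (hopen i).connectedComponentIn
  have hA : AnalyticOnNhd ℂ (τ i) (connectedComponentIn (U i) z) :=
    ((hhol i).mono (connectedComponentIn_subset _ _)).analyticOnNhd hC
  have hev : τ i =ᶠ[nhds z] 0 := Filter.eventuallyEq_of_mem (hN.mem_nhds hz) h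
  have hEq := hA.eqOn_zero_of_preconnected_of_eventuallyEq_zero
    isPreconnected_connectedComponentIn (mem_connectedComponentIn hzU) hev
  obtain ⟨w, hw, hwne⟩ := hnz i z hzU
  exact hwne (hEq hw)

lemma goodOn_mono {V V' : Set ℂ} {g : ℂ → ℂ} (h : GoodOn U τ V g) (hV' : IsOpen V')
    (hsub : V' ⊆ V) : GoodOn U τ V' g := by
  intro z hz
  obtain ⟨i, m, N, hNo, hzN, hNV, hNU, hm, hg⟩ := h z (hsub hz)
  exact ⟨i, m, N ∩ V', hNo.inter hV', ⟨hzN, hz⟩, inter_subset_right,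
    (inter_subset_left).trans hNU, hm, fun w hw => hg w hw.1⟩

/-- Unique continuation for `GoodOn` functions on a preconnected open set. -/
lemma goodOn_unique (hopen : ∀ i, IsOpen (U i)) (hhol : ∀ i, DifferentiableOn ℂ (τ i) (U i))
    (hnz : ∀ i, ∀ z ∈ U i, ∃ w ∈ connectedComponentIn (U i) z, τ i w ≠ 0)
    (hpair : ∀ i j, (U i ∩ U j).Nonempty →
      ∃ c : ℂ, c ≠ 0 ∧ ∀ z ∈ U i ∩ U j, τ i z = c * τ j z)
    {V : Set ℂ} (hV : IsOpen V) (hVp : IsPreconnected V) {f g : ℂ → ℂ}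
    (hf : GoodOn U τ V f) (hg : GoodOn U τ V g) {W : Set ℂ} (hW : IsOpen W)
    (hWne : W.Nonempty) (hWV : W ⊆ V) (hfg : EqOn f g W) : EqOn f g V := by
  classical
  set A : Set ℂ := {x | ∃ N, IsOpen N ∧ x ∈ N ∧ EqOn f g N} with hA
  have hAopen : IsOpen A := by
    apply isOpen_iff_mem_nhds.2
    rintro x ⟨N, hNo, hxN, hEq⟩
    exact Filter.mem_of_superset (hNo.mem_nhds hxN) (fun y hy => ⟨N, hNo, hy, hEq⟩)
  set B : Set ℂ := {x | ∃ N, IsOpen N ∧ x ∈ N ∧ N ∩ A = ∅} with hB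
  have hBopen : IsOpen B := by
    apply isOpen_iff_mem_nhds.2
    rintro x ⟨N, hNo, hxN, hEq⟩
    exact Filter.mem_of_superset (hNo.mem_nhds hxN) (fun y hy => ⟨N, hNo, hy, hEq⟩)
  have hdisj : Disjoint A B := by
    rw [Set.disjoint_left]
    rintro x hxA ⟨N, hNo, hxN, hNA⟩
    exact absurd (Set.mem_inter hxN hxA) (by simp [hNA])
  have hsub : V ⊆ A ∪ B := by
    intro z hz
    obtain ⟨i, m, N₁, hN₁o, hzN₁, hN₁V, hN₁U, hm, hfloc⟩ := hf z hz
    obtain ⟨j, m', N₂, hN₂o, hzN₂, hN₂V, hN₂U, hm', hgloc⟩ := hg z hz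
    obtain ⟨c, hc, hcEq⟩ := hpair i j ⟨z, hN₁U hzN₁, hN₂U hzN₂⟩
    set N := N₁ ∩ N₂ with hN
    have hNo : IsOpen N := hN₁o.inter hN₂o
    have hzN : z ∈ N := ⟨hzN₁, hzN₂⟩
    have hNUj : N ⊆ U j := fun w hw => hN₂U hw.2
    have hfN : ∀ w ∈ N, f w = (m * c) * τ j w := by
      intro w hw
      rw [hfloc w hw.1, hcEq w ⟨hN₁U hw.1, hN₂U hw.2⟩]; ring
    by_cases hmm : m * c = m'
    · left
      refine ⟨N, hNo, hzN, fun w hw => ?_⟩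
      rw [hfN w hw, hgloc w hw.2, hmm]
    · right
      refine ⟨N, hNo, hzN, ?_⟩
      rw [Set.eq_empty_iff_forall_notMem]
      rintro x ⟨hxN, N', hN'o, hxN', hEq⟩
      have hsub2 : N ∩ N' ⊆ U j := fun w hw => hNUj hw.1
      obtain ⟨w, hw, hwne⟩ := exists_ne_zero hopen hhol hnz j (hNo.inter hN'o) hsub2 ⟨x, hxN, hxN'⟩
      have h1 : (m * c) * τ j w = m' * τ j w := by
        rw [← hfN w hw.1, hEq hw.2, hgloc w hw.1.2]
      exact hmm (mul_right_cancel₀ hwne h1)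
  have hAne : (V ∩ A).Nonempty := by
    obtain ⟨x, hx⟩ := hWne
    exact ⟨x, hWV hx, W, hW, hx, hfg⟩
  have := hVp.subset_left_of_subset_union hAopen hBopen hdisj hsub hAne
  intro z hz
  obtain ⟨N, _, hzN, hEq⟩ := this hz
  exact hEq hzN

/-- On a preconnected open subset of a single `U i`, a `GoodOn`-type function is globally a
single nonzero constant multiple of `τ i`. -/
lemma ratio_const (hopen : ∀ i, IsOpen (U i)) (hhol : ∀ i, DifferentiableOn ℂ (τ i) (U i))
    (hnz : ∀ i, ∀ z ∈ U i, ∃ w ∈ connectedComponentIn (U i) z, τ i w ≠ 0)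
    {V : Set ℂ} (hVp : IsPreconnected V) {i : I} (hVi : V ⊆ U i) {g : ℂ → ℂ}
    (hloc : ∀ z ∈ V, ∃ m N, IsOpen N ∧ z ∈ N ∧ N ⊆ V ∧ m ≠ 0 ∧ ∀ w ∈ N, g w = m * τ i w)
    (hVne : V.Nonempty) : ∃ m, m ≠ 0 ∧ ∀ w ∈ V, g w = m * τ i w := by
  classical
  obtain ⟨z₀, hz₀⟩ := hVne
  obtain ⟨m₀, N₀, hN₀o, hzN₀, hN₀V, hm₀, hg₀⟩ := hloc z₀ hz₀
  refine ⟨m₀, hm₀, ?_⟩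
  set A : Set ℂ := {x | ∃ N, IsOpen N ∧ x ∈ N ∧ N ⊆ V ∧ ∀ w ∈ N, g w = m₀ * τ i w} with hA
  set B : Set ℂ := {x | ∃ m N, m ≠ m₀ ∧ IsOpen N ∧ x ∈ N ∧ N ⊆ V ∧ ∀ w ∈ N, g w = m * τ i w}
    with hB
  have hAopen : IsOpen A := by
    apply isOpen_iff_mem_nhds.2
    rintro x ⟨N, hNo, hxN, hNV, hEq⟩
    exact Filter.mem_of_superset (hNo.mem_nhds hxN) (fun y hy => ⟨N, hNo, hy, hNV, hEq⟩)
  have hBopen : IsOpen B := by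
    apply isOpen_iff_mem_nhds.2
    rintro x ⟨m, N, hm, hNo, hxN, hNV, hEq⟩
    exact Filter.mem_of_superset (hNo.mem_nhds hxN) (fun y hy => ⟨m, N, hm, hNo, hy, hNV, hEq⟩)
  have hdisj : Disjoint A B := by
    rw [Set.disjoint_left]
    rintro x ⟨N, hNo, hxN, hNV, hEq⟩ ⟨m, N', hm, hN'o, hxN', hN'V, hEq'⟩
    have hsub2 : N ∩ N' ⊆ U i := fun w hw => hVi (hNV hw.1)
    obtain ⟨w, hw, hwne⟩ := exists_ne_zero hopen hhol hnz i (hNo.inter hN'o) hsub2 ⟨x, hxN, hxN'⟩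
    have h1 : m₀ * τ i w = m * τ i w := by rw [← hEq w hw.1, hEq' w hw.2]
    exact hm (mul_right_cancel₀ hwne h1).symm
  have hsub : V ⊆ A ∪ B := by
    intro z hz
    obtain ⟨m, N, hNo, hzN, hNV, hm, hEq⟩ := hloc z hz
    by_cases hmm : m = m₀
    · exact Or.inl ⟨N, hNo, hzN, hNV, fun w hw => hmm ▸ hEq w hw⟩
    · exact Or.inr ⟨m, N, hmm, hNo, hzN, hNV, hEq⟩
  have hAne : (V ∩ A).Nonempty := ⟨z₀, hz₀, N₀, hN₀o, hzN₀, hN₀V, hg₀⟩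
  have hVA := hVp.subset_left_of_subset_union hAopen hBopen hdisj hsub hAne
  intro w hw
  obtain ⟨N, _, hwN, _, hEq⟩ := hVA hw
  exact hEq w hwN

lemma midpoint_lt {p q : ℂ} {ρ : ℝ} (hρ : 0 < ρ) (hpq : p ≠ q) (hp : ‖p‖ = ρ) (hq : ‖q‖ = ρ) :
    ‖(p + q) / 2‖ < ρ := by
  have par := parallelogram_law_with_norm ℝ p q
  have h1 : 0 < ‖p - q‖ := by simpa [sub_eq_zero] using hpq
  have h3 : ‖p + q‖ < 2 * ρ := by nlinarith [norm_nonneg (p + q)]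
  have h4 : ‖(p + q) / 2‖ = ‖p + q‖ / 2 := by rw [norm_div]; norm_num
  rw [h4]; linarith

lemma extend (hopen : ∀ i, IsOpen (U i)) (hhol : ∀ i, DifferentiableOn ℂ (τ i) (U i))
    (hnz : ∀ i, ∀ z ∈ U i, ∃ w ∈ connectedComponentIn (U i) z, τ i w ≠ 0)
    (hpair : ∀ i j, (U i ∩ U j).Nonempty →
      ∃ c : ℂ, c ≠ 0 ∧ ∀ z ∈ U i ∩ U j, τ i z = c * τ j z)
    (hcov : ∀ z : ℂ, ∃ i, z ∈ U i)
    {ρ : ℝ} (hρ : 0 < ρ) {g0 : ℂ → ℂ} (hg0 : GoodOn U τ (ball 0 ρ) g0) :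
    ∃ δ > 0, ∃ g : ℂ → ℂ, GoodOn U τ (ball 0 (ρ + δ)) g ∧ EqOn g g0 (ball 0 ρ) := by
  classical
  have hne : Nonempty I := ⟨(hcov 0).choose⟩
  have hcomp : IsCompact (sphere (0:ℂ) ρ) := isCompact_sphere _ _
  have hcov' : sphere (0:ℂ) ρ ⊆ ⋃ i, U i := fun x _ => by
    obtain ⟨i, hi⟩ := hcov x; exact Set.mem_iUnion.2 ⟨i, hi⟩
  obtain ⟨δ₀, hδ₀, hballL⟩ := lebesgue_number_lemma_of_metric hcomp hopen hcov'
  set δ := min δ₀ ρ with hδdef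
  have hδpos : 0 < δ := lt_min hδ₀ hρ
  have hδρ : δ ≤ ρ := min_le_right _ _
  have hchoice : ∀ p : ℂ, ∃ i, p ∈ sphere (0:ℂ) ρ → ball p δ ⊆ U i := by
    intro p
    by_cases hp : p ∈ sphere (0:ℂ) ρ
    · exact (hballL p hp).imp (fun i h _ => (ball_subset_ball (min_le_left _ _)).trans h)
    · exact ⟨hne.some, fun h => absurd h hp⟩
  choose ι hι using hchoice
  have hOne : ∀ p ∈ sphere (0:ℂ) ρ, ((1 - δ/(2*ρ)) • p) ∈ ball p δ ∩ ball 0 ρ := by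
    intro p hp
    have hpn : ‖p‖ = ρ := mem_sphere_zero_iff_norm.1 hp
    have ht0 : 0 < δ/(2*ρ) := by positivity
    have ht1 : δ/(2*ρ) ≤ 1/2 := by
      rw [div_le_div_iff₀ (by positivity) (by norm_num)]; linarith
    constructor
    · rw [mem_ball_iff_norm]
      have he : (1 - δ/(2*ρ)) • p - p = (-(δ/(2*ρ))) • p := by
        rw [sub_smul, one_smul, neg_smul]; ring_nf
      rw [he, norm_smul, Real.norm_eq_abs, abs_neg, abs_of_pos ht0, hpn]
      rw [div_mul_eq_mul_div, div_lt_iff₀ (by positivity)]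
      nlinarith
    · rw [mem_ball_zero_iff, norm_smul, Real.norm_eq_abs, abs_of_pos (by linarith), hpn]
      nlinarith
  have hmex : ∀ p : ℂ, ∃ m, m ≠ 0 ∧ (p ∈ sphere (0:ℂ) ρ →
      ∀ w ∈ ball p δ ∩ ball 0 ρ, g0 w = m * τ (ι p) w) := by
    intro p
    by_cases hp : p ∈ sphere (0:ℂ) ρ
    · have hVp : IsPreconnected (ball p δ ∩ ball 0 ρ) :=
        ((convex_ball p δ).inter (convex_ball 0 ρ)).isPreconnected
      have hVi : ball p δ ∩ ball 0 ρ ⊆ U (ι p) := fun w hw => hι p hp hw.1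
      have hloc : ∀ z ∈ ball p δ ∩ ball 0 ρ, ∃ m N, IsOpen N ∧ z ∈ N ∧
          N ⊆ ball p δ ∩ ball 0 ρ ∧ m ≠ 0 ∧ ∀ w ∈ N, g0 w = m * τ (ι p) w := by
        intro z hz
        obtain ⟨i, m, N, hNo, hzN, hNV, hNU, hm, hEq⟩ := hg0 z hz.2
        obtain ⟨c, hc, hcEq⟩ := hpair i (ι p) ⟨z, hNU hzN, hι p hp hz.1⟩
        refine ⟨m * c, N ∩ (ball p δ ∩ ball 0 ρ), hNo.inter ((isOpen_ball).inter isOpen_ball),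
          ⟨hzN, hz⟩, inter_subset_right, mul_ne_zero hm hc, fun w hw => ?_⟩
        rw [hEq w hw.1, hcEq w ⟨hNU hw.1, hVi hw.2⟩]; ring
      obtain ⟨m, hm, hEq⟩ := ratio_const hopen hhol hnz hVp hVi hloc ⟨_, hOne p hp⟩
      exact ⟨m, hm, fun _ => hEq⟩
    · exact ⟨1, one_ne_zero, fun h => absurd h hp⟩
  choose mf hmf using hmex
  have hmf0 : ∀ p, mf p ≠ 0 := fun p => (hmf p).1
  have hmfE : ∀ p, p ∈ sphere (0:ℂ) ρ → ∀ w ∈ ball p δ ∩ ball 0 ρ,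
      g0 w = mf p * τ (ι p) w := fun p hp => (hmf p).2 hp
  have compat : ∀ p ∈ sphere (0:ℂ) ρ, ∀ q ∈ sphere (0:ℂ) ρ, ∀ z ∈ ball p δ ∩ ball q δ,
      mf p * τ (ι p) z = mf q * τ (ι q) z := by
    intro p hp q hq z hz
    rcases eq_or_ne p q with rfl | hpq
    · rfl
    have hpn : ‖p‖ = ρ := mem_sphere_zero_iff_norm.1 hp
    have hqn : ‖q‖ = ρ := mem_sphere_zero_iff_norm.1 hq
    have hdist : ‖p - q‖ < 2 * δ := by
      have h1 : ‖z - p‖ < δ := mem_ball_iff_norm.1 hz.1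
      have h2 : ‖z - q‖ < δ := mem_ball_iff_norm.1 hz.2
      calc ‖p - q‖ = ‖(z - q) - (z - p)‖ := by ring_nf
        _ ≤ ‖z - q‖ + ‖z - p‖ := norm_sub_le _ _
        _ < 2 * δ := by linarith
    have hnorm2 : ‖(2:ℂ)‖ = 2 := by norm_num
    have hmidp : (p + q)/2 ∈ ball p δ := by
      rw [mem_ball_iff_norm]
      have he : (p + q)/2 - p = -((p - q) / 2) := by ring
      rw [he, norm_neg, norm_div, hnorm2]
      linarith
    have hmidq : (p + q)/2 ∈ ball q δ := by
      rw [mem_ball_iff_norm]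
      have he : (p + q)/2 - q = (p - q) / 2 := by ring
      rw [he, norm_div, hnorm2]
      linarith
    have hmid0 : (p + q)/2 ∈ ball (0:ℂ) ρ :=
      mem_ball_zero_iff.2 (midpoint_lt hρ hpq hpn hqn)
    obtain ⟨c, hc, hcEq⟩ := hpair (ι p) (ι q) ⟨(p+q)/2, hι p hp hmidp, hι q hq hmidq⟩
    have hW'o : IsOpen (ball p δ ∩ ball q δ ∩ ball (0:ℂ) ρ) :=
      (isOpen_ball.inter isOpen_ball).inter isOpen_ball
    have hW'U : ball p δ ∩ ball q δ ∩ ball (0:ℂ) ρ ⊆ U (ι q) := fun w hw => hι q hq hw.1.2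
    obtain ⟨w, hw, hwne⟩ := exists_ne_zero hopen hhol hnz (ι q) hW'o hW'U
      ⟨(p+q)/2, ⟨hmidp, hmidq⟩, hmid0⟩
    have key : mf p * c = mf q := by
      have e1 : g0 w = mf p * τ (ι p) w := hmfE p hp w ⟨hw.1.1, hw.2⟩
      have e2 : g0 w = mf q * τ (ι q) w := hmfE q hq w ⟨hw.1.2, hw.2⟩
      have e3 : τ (ι p) w = c * τ (ι q) w := hcEq w ⟨hι p hp hw.1.1, hι q hq hw.1.2⟩
      have : (mf p * c) * τ (ι q) w = mf q * τ (ι q) w := by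
        rw [← e2, e1, e3]; ring
      exact mul_right_cancel₀ hwne this
    rw [hcEq z ⟨hι p hp hz.1, hι q hq hz.2⟩, ← key]; ring
  -- define the extended function
  set g : ℂ → ℂ := fun z => if z ∈ ball (0:ℂ) ρ then g0 z
    else if h : ∃ p, p ∈ sphere (0:ℂ) ρ ∧ z ∈ ball p δ
      then mf h.choose * τ (ι h.choose) z else 0 with hgdef
  have hgball : EqOn g g0 (ball 0 ρ) := fun z hz => by simp only [hgdef, if_pos hz]
  have key2 : ∀ p, p ∈ sphere (0:ℂ) ρ → ∀ z ∈ ball p δ, g z = mf p * τ (ι p) z := by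
    intro p hp z hz
    by_cases hz0 : z ∈ ball (0:ℂ) ρ
    · rw [hgball hz0]; exact hmfE p hp z ⟨hz, hz0⟩
    · have hex : ∃ p', p' ∈ sphere (0:ℂ) ρ ∧ z ∈ ball p' δ := ⟨p, hp, hz⟩
      simp only [hgdef, if_neg hz0, dif_pos hex]
      exact compat _ hex.choose_spec.1 p hp z ⟨hex.choose_spec.2, hz⟩
  refine ⟨δ, hδpos, g, ?_, hgball⟩
  intro z hz
  by_cases h1 : z ∈ ball (0:ℂ) ρ
  · obtain ⟨i, m, N, hNo, hzN, hNV, hNU, hm, hEq⟩ := hg0 z h1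
    exact ⟨i, m, N, hNo, hzN, hNV.trans (ball_subset_ball (by linarith)), hNU, hm,
      fun w hw => by rw [hgball (hNV hw)]; exact hEq w hw⟩
  · have hzρ : ρ ≤ ‖z‖ := le_of_not_gt (fun h => h1 (mem_ball_zero_iff.2 h))
    have hzpos : 0 < ‖z‖ := lt_of_lt_of_le hρ hzρ
    set p := (ρ / ‖z‖) • z with hpdef
    have hpn : ‖p‖ = ρ := by
      rw [hpdef, norm_smul, Real.norm_eq_abs, abs_of_pos (by positivity),
        div_mul_cancel₀ _ (ne_of_gt hzpos)]
    have hp : p ∈ sphere (0:ℂ) ρ := mem_sphere_zero_iff_norm.2 hpn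
    have hzp : z ∈ ball p δ := by
      rw [mem_ball_iff_norm]
      have he : z - p = (1 - ρ / ‖z‖) • z := by
        rw [hpdef, sub_smul, one_smul]
      rw [he, norm_smul, Real.norm_eq_abs,
        abs_of_nonneg (by rw [sub_nonneg, div_le_one hzpos]; exact hzρ)]
      have hz' : ‖z‖ < ρ + δ := mem_ball_zero_iff.1 hz
      have : (1 - ρ / ‖z‖) * ‖z‖ = ‖z‖ - ρ := by
        rw [sub_mul, one_mul, div_mul_cancel₀ _ (ne_of_gt hzpos)]
      rw [this]; linarith
    refine ⟨ι p, mf p, ball p δ, isOpen_ball, hzp, ?_, hι p hp, hmf0 p, key2 p hp⟩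
    intro w hw
    rw [mem_ball_zero_iff]
    have h5 : ‖w - p‖ < δ := mem_ball_iff_norm.1 hw
    have h6 : ‖w‖ ≤ ‖w - p‖ + ‖p‖ := by
      calc ‖w‖ = ‖(w - p) + p‖ := by ring_nf
        _ ≤ ‖w - p‖ + ‖p‖ := norm_add_le _ _
    rw [hpn] at h6
    linarith

/-- A globally defined function which is locally a nonzero constant multiple of some `τ i`. -/
lemma global (hopen : ∀ i, IsOpen (U i)) (hhol : ∀ i, DifferentiableOn ℂ (τ i) (U i))
    (hnz : ∀ i, ∀ z ∈ U i, ∃ w ∈ connectedComponentIn (U i) z, τ i w ≠ 0)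
    (hpair : ∀ i j, (U i ∩ U j).Nonempty →
      ∃ c : ℂ, c ≠ 0 ∧ ∀ z ∈ U i ∩ U j, τ i z = c * τ j z)
    (hcov : ∀ z : ℂ, ∃ i, z ∈ U i) :
    ∃ T : ℂ → ℂ, ∀ z : ℂ, ∃ i m N, IsOpen N ∧ z ∈ N ∧ N ⊆ U i ∧ m ≠ 0 ∧
      ∀ w ∈ N, T w = m * τ i w := by
  classical
  obtain ⟨i0, hi0⟩ := hcov 0
  obtain ⟨ε0, hε0, hεsub⟩ := Metric.isOpen_iff.1 (hopen i0) 0 hi0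
  set P : ℝ → (ℂ → ℂ) → Prop := fun r g => GoodOn U τ (ball 0 r) g ∧
    ∃ N, IsOpen N ∧ (0:ℂ) ∈ N ∧ ∀ w ∈ N, g w = τ i0 w with hPdef
  set A : Set ℝ := {r | 0 < r ∧ ∃ g, P r g} with hAdef
  have h_base : ε0 ∈ A := by
    refine ⟨hε0, τ i0, fun z hz => ⟨i0, 1, ball 0 ε0, isOpen_ball, hz, subset_rfl, hεsub,
      one_ne_zero, fun w _ => (one_mul _).symm⟩,
      ball 0 ε0, isOpen_ball, mem_ball_self hε0, fun w _ => rfl⟩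
  have h_mono : ∀ r r', 0 < r → r ≤ r' → r' ∈ A → r ∈ A := by
    rintro r r' hr hrr' ⟨_, g, hg1, hg2⟩
    exact ⟨hr, g, goodOn_mono hg1 isOpen_ball (ball_subset_ball hrr'), hg2⟩
  have h_agree : ∀ r r' g g', 0 < r → 0 < r' → P r g → P r' g' →
      EqOn g g' (ball 0 (min r r')) := by
    rintro r r' g g' hr hr' ⟨hg1, N, hNo, hN0, hNEq⟩ ⟨hg'1, N', hN'o, hN'0, hN'Eq⟩
    refine goodOn_unique hopen hhol hnz hpair isOpen_ball
      ((convex_ball (0:ℂ) (min r r')).isPreconnected)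
      (goodOn_mono hg1 isOpen_ball (ball_subset_ball (min_le_left _ _)))
      (goodOn_mono hg'1 isOpen_ball (ball_subset_ball (min_le_right _ _)))
      ((hNo.inter hN'o).inter isOpen_ball)
      ⟨0, ⟨hN0, hN'0⟩, mem_ball_self (lt_min hr hr')⟩ inter_subset_right
      (fun w hw => ?_)
    rw [hNEq w hw.1.1, hN'Eq w hw.1.2]
  set F : ℝ → ℂ → ℂ := fun r => if h : ∃ g, P r g then h.choose else 0 with hFdef
  have hF : ∀ r ∈ A, P r (F r) := by
    rintro r ⟨hr, hex⟩
    simp only [hFdef, dif_pos hex]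
    exact hex.choose_spec
  have h_glue : ∀ ρ, 0 < ρ → (∀ r, 0 < r → r < ρ → r ∈ A) → ∃ g, P ρ g := by
    intro ρ hρ hall
    set G : ℂ → ℂ := fun z => F ((‖z‖ + ρ)/2) z with hGdef
    have claim : ∀ z : ℂ, ‖z‖ < ρ → ∀ r, ‖z‖ < r → r < ρ → G z = F r z := by
      intro z hz r h1 h2
      have hr1 : 0 < (‖z‖ + ρ)/2 := by positivity
      have hr2 : (‖z‖ + ρ)/2 < ρ := by linarith
      have hr0 : 0 < r := lt_of_le_of_lt (norm_nonneg z) h1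
      have := h_agree _ r _ _ hr1 hr0 (hF _ (hall _ hr1 hr2)) (hF r (hall r hr0 h2))
      exact this (mem_ball_zero_iff.2 (lt_min (by linarith) h1))
    refine ⟨G, ?_, ?_⟩
    · intro z hz
      have hz' : ‖z‖ < ρ := mem_ball_zero_iff.1 hz
      set r := (‖z‖ + ρ)/2 with hrdef
      have hr0 : 0 < r := by positivity
      have hrρ : r < ρ := by rw [hrdef]; linarith
      have hzr : ‖z‖ < r := by rw [hrdef]; linarith
      obtain ⟨i, m, N, hNo, hzN, hNV, hNU, hm, hEq⟩ :=
        (hF r (hall r hr0 hrρ)).1 z (mem_ball_zero_iff.2 hzr)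
      refine ⟨i, m, N, hNo, hzN, hNV.trans (ball_subset_ball hrρ.le), hNU, hm, fun w hw => ?_⟩
      have hwr : ‖w‖ < r := mem_ball_zero_iff.1 (hNV hw)
      rw [claim w (hwr.trans hrρ) r hwr hrρ]
      exact hEq w hw
    · obtain ⟨N, hNo, hN0, hNEq⟩ := (hF (ρ/2) (hall _ (by positivity) (by linarith))).2
      refine ⟨N ∩ ball 0 (ρ/2), hNo.inter isOpen_ball,
        ⟨hN0, mem_ball_self (by positivity)⟩, fun w hw => ?_⟩
      have hw2 : ‖w‖ < ρ/2 := mem_ball_zero_iff.1 hw.2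
      rw [claim w (by linarith) (ρ/2) hw2 (by linarith)]
      exact hNEq w hw.1
  have h_all : ∀ r, 0 < r → r ∈ A := by
    by_contra h
    push_neg at h
    obtain ⟨r0, hr0, hr0A⟩ := h
    have hbdd : BddAbove A := ⟨r0, fun r hr =>
      le_of_not_gt (fun hlt => hr0A (h_mono r0 r hr0 hlt.le hr))⟩
    have hAne : A.Nonempty := ⟨ε0, h_base⟩
    set ρ := sSup A with hρdef
    have hρpos : 0 < ρ := lt_of_lt_of_le hε0 (le_csSup hbdd h_base)
    have hlt : ∀ r, 0 < r → r < ρ → r ∈ A := by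
      intro r hr hrρ
      obtain ⟨r', hr'A, hrr'⟩ := exists_lt_of_lt_csSup hAne hrρ
      exact h_mono r r' hr hrr'.le hr'A
    obtain ⟨g, hg⟩ := h_glue ρ hρpos hlt
    obtain ⟨δ, hδ, g', hg', hEq⟩ := extend hopen hhol hnz hpair hcov hρpos hg.1
    have hmem : ρ + δ ∈ A := by
      obtain ⟨N, hNo, hN0, hNEq⟩ := hg.2
      refine ⟨by linarith, g', hg', N ∩ ball 0 ρ, hNo.inter isOpen_ball,
        ⟨hN0, mem_ball_self hρpos⟩, fun w hw => ?_⟩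
      rw [hEq hw.2]
      exact hNEq w hw.1
    have := le_csSup hbdd hmem
    linarith
  refine ⟨fun z => F (‖z‖ + 1) z, fun z => ?_⟩
  have hz1 : (0:ℝ) < ‖z‖ + 1 := by positivity
  obtain ⟨i, m, N, hNo, hzN, hNV, hNU, hm, hEq⟩ :=
    (hF _ (h_all _ hz1)).1 z (mem_ball_zero_iff.2 (by linarith))
  refine ⟨i, m, N, hNo, hzN, hNU, hm, fun w hw => ?_⟩
  have hwr : ‖w‖ < ‖z‖ + 1 := mem_ball_zero_iff.1 (hNV hw)
  have hw1 : (0:ℝ) < ‖w‖ + 1 := by positivity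
  have := h_agree (‖w‖ + 1) (‖z‖ + 1) _ _ hw1 hz1 (hF _ (h_all _ hw1)) (hF _ (h_all _ hz1))
  show F (‖w‖ + 1) w = m * τ i w
  rw [this (mem_ball_zero_iff.2 (lt_min (by linarith) hwr))]
  exact hEq w hw

end GlueTauAux

/-- Gluing of local tau-functions: holomorphic functions on an open cover of ℂ,
pairwise proportional by nonzero constants on overlaps and not identically zero
on any connected component, glue (after rescaling by locally constant nonzero
factors) to a single entire function. -/
theorem glue_local_tau_functions
    {I : Type*} (U : I → Set ℂ) (hopen : ∀ i, IsOpen (U i))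
    (hcover : (⋃ i, U i) = Set.univ)
    (τ : I → ℂ → ℂ) (hhol : ∀ i, DifferentiableOn ℂ (τ i) (U i))
    (hnz : ∀ i, ∀ z ∈ U i, ∃ w ∈ connectedComponentIn (U i) z, τ i w ≠ 0)
    (hpair : ∀ i j, (U i ∩ U j).Nonempty →
      ∃ c : ℂ, c ≠ 0 ∧ ∀ z ∈ U i ∩ U j, τ i z = c * τ j z) :
    ∃ T : ℂ → ℂ, Differentiable ℂ T ∧
      ∀ i, ∃ c : ℂ → ℂ,
        (∀ z ∈ U i, c z ≠ 0) ∧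
        (∀ z ∈ U i, ∀ w ∈ connectedComponentIn (U i) z, c w = c z) ∧
        (∀ z ∈ U i, T z = c z * τ i z) := by
  classical
  have hcov : ∀ z : ℂ, ∃ i, z ∈ U i := fun z => by
    have hz : z ∈ ⋃ i, U i := hcover ▸ Set.mem_univ z
    exact Set.mem_iUnion.1 hz
  obtain ⟨T, hT⟩ := GlueTauAux.global hopen hhol hnz hpair hcov
  refine ⟨T, ?_, ?_⟩
  · intro z
    obtain ⟨i, m, N, hNo, hzN, hNU, hm, hEq⟩ := hT z
    have hτ : DifferentiableAt ℂ (τ i) z :=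
      (hhol i).differentiableAt ((hopen i).mem_nhds (hNU hzN))
    have hd : DifferentiableAt ℂ (fun w => m * τ i w) z := hτ.const_mul m
    exact hd.congr_of_eventuallyEq (Filter.eventuallyEq_of_mem (hNo.mem_nhds hzN) hEq)
  · intro i
    set Q : ℂ → ℂ → Prop := fun z m =>
      ∃ N, IsOpen N ∧ z ∈ N ∧ N ⊆ U i ∧ ∀ w ∈ N, T w = m * τ i w with hQdef
    have hQex : ∀ z ∈ U i, ∃ m, m ≠ 0 ∧ Q z m := by
      intro z hzU
      obtain ⟨j, m, N, hNo, hzN, hNU, hm, hEq⟩ := hT z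
      obtain ⟨c, hc, hcEq⟩ := hpair j i ⟨z, hNU hzN, hzU⟩
      refine ⟨m * c, mul_ne_zero hm hc, N ∩ U i, hNo.inter (hopen i), ⟨hzN, hzU⟩,
        Set.inter_subset_right, fun w hw => ?_⟩
      rw [hEq w hw.1, hcEq w ⟨hNU hw.1, hw.2⟩]; ring
    have hQuniq : ∀ z ∈ U i, ∀ m m', Q z m → Q z m' → m = m' := by
      rintro z hzU m m' ⟨N, hNo, hzN, hNU, hEq⟩ ⟨N', hN'o, hzN', hN'U, hEq'⟩
      obtain ⟨w, hw, hwne⟩ := GlueTauAux.exists_ne_zero hopen hhol hnz i (hNo.inter hN'o)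
        (fun w hw => hNU hw.1) ⟨z, hzN, hzN'⟩
      exact mul_right_cancel₀ hwne (by rw [← hEq w hw.1, hEq' w hw.2])
    set c : ℂ → ℂ := fun z => if h : ∃ m, m ≠ 0 ∧ Q z m then h.choose else 1 with hcdef
    have hc : ∀ z ∈ U i, c z ≠ 0 ∧ Q z (c z) := by
      intro z hz
      have h := hQex z hz
      simp only [hcdef, dif_pos h]
      exact h.choose_spec
    have hcloc : ∀ z ∈ U i, ∃ N, IsOpen N ∧ z ∈ N ∧ N ⊆ U i ∧ ∀ w ∈ N, c w = c z := by
      intro z hz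
      obtain ⟨N, hNo, hzN, hNU, hEq⟩ := (hc z hz).2
      refine ⟨N, hNo, hzN, hNU, fun w hw => ?_⟩
      exact hQuniq w (hNU hw) _ _ (hc w (hNU hw)).2 ⟨N, hNo, hw, hNU, hEq⟩
    refine ⟨c, fun z hz => (hc z hz).1, ?_, fun z hz => ?_⟩
    · intro z hz w hw
      have hCsub : connectedComponentIn (U i) z ⊆ U i := connectedComponentIn_subset _ _
      set Ag : Set ℂ := {x | ∃ N, IsOpen N ∧ x ∈ N ∧ N ⊆ U i ∧ ∀ y ∈ N, c y = c z} with hAgdef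
      set Bb : Set ℂ :=
        {x | ∃ m N, m ≠ c z ∧ IsOpen N ∧ x ∈ N ∧ N ⊆ U i ∧ ∀ y ∈ N, c y = m} with hBbdef
      have hAo : IsOpen Ag := isOpen_iff_mem_nhds.2 (by
        rintro x ⟨N, hNo, hxN, hNU, hEq⟩
        exact Filter.mem_of_superset (hNo.mem_nhds hxN) (fun y hy => ⟨N, hNo, hy, hNU, hEq⟩))
      have hBo : IsOpen Bb := isOpen_iff_mem_nhds.2 (by
        rintro x ⟨m, N, hm, hNo, hxN, hNU, hEq⟩
        exact Filter.mem_of_superset (hNo.mem_nhds hxN)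
          (fun y hy => ⟨m, N, hm, hNo, hy, hNU, hEq⟩))
      have hdisj : Disjoint Ag Bb := by
        rw [Set.disjoint_left]
        rintro x ⟨N, hNo, hxN, hNU, hEq⟩ ⟨m, N', hm, hN'o, hxN', hN'U, hEq'⟩
        exact hm (by rw [← hEq' x hxN', hEq x hxN])
      have hsub : connectedComponentIn (U i) z ⊆ Ag ∪ Bb := by
        intro x hx
        obtain ⟨N, hNo, hxN, hNU, hEq⟩ := hcloc x (hCsub hx)
        by_cases hcx : c x = c z
        · exact Or.inl ⟨N, hNo, hxN, hNU, fun y hy => by rw [hEq y hy, hcx]⟩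
        · exact Or.inr ⟨c x, N, hcx, hNo, hxN, hNU, hEq⟩
      have hzC : z ∈ connectedComponentIn (U i) z := mem_connectedComponentIn hz
      have hAne : (connectedComponentIn (U i) z ∩ Ag).Nonempty := by
        obtain ⟨N, hNo, hzN, hNU, hEq⟩ := hcloc z hz
        exact ⟨z, hzC, N, hNo, hzN, hNU, hEq⟩
      have hCA := isPreconnected_connectedComponentIn.subset_left_of_subset_union
        hAo hBo hdisj hsub hAne
      obtain ⟨N, hNo, hwN, hNU, hEq⟩ := hCA hw
      exact hEq w hwN
    · obtain ⟨N, hNo, hzN, hNU, hEq⟩ := (hc z hz).2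
      exact hEq z hzN
end
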